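/- For every s > 1 and every i ∈ ℕ, the i-th salient p-point sᵢ of the arc-component C of the endpoint 0̄ satisfies sᵢ = σ^{i−1}(s₁) and L_p(sᵢ) = i. -/
import Mathlib


/-- The tent map `T_s(x) = min (s*x) (s*(1-x))`. -/
noncomputable def tent (s : ℝ) (x : ℝ) : ℝ := min (s * x) (s * (1 - x))

/-- The inverse limit space `K_s = lim← ([0,s/2], T_s)`, coordinates indexed so that
`x i` is the coordinate `x₋ᵢ`. -/
def Ks (s : ℝ) : Set (ℕ → ℝ) :=
  {x | ∀ i, x i ∈ Set.Icc 0 (s / 2) ∧ tent s (x (i + 1)) = x i}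

/-- A map `σ : K_s → K_s` is the shift homeomorphism iff it appends `T_s(x₀)`. -/
def IsShift (s : ℝ) (σ : Ks s → Ks s) : Prop :=
  ∀ x : Ks s, ((σ x : ℕ → ℝ) 0 = tent s ((x : ℕ → ℝ) 0)) ∧
    ∀ i, (σ x : ℕ → ℝ) (i + 1) = (x : ℕ → ℝ) i

/-- The metric `d(x,y) = Σ_{n ≤ 0} 2ⁿ |xₙ - yₙ|` on `K_s`. -/
noncomputable def D (s : ℝ) (x y : Ks s) : ℝ :=
  ∑' i : ℕ, (1 / 2 : ℝ) ^ i * |(x : ℕ → ℝ) i - (y : ℕ → ℝ) i|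

/-- The set of candidate `p`-levels of `x`. -/
def pLevelSet (s : ℝ) (p : ℕ) (x : Ks s) : Set ℕ :=
  {l | (x : ℕ → ℝ) (p + l) = 1 / 2}

/-- `x` is a `p`-point. -/
def IsPPoint (s : ℝ) (p : ℕ) (x : Ks s) : Prop := (pLevelSet s p x).Nonempty

/-- The `p`-level of a `p`-point. -/
noncomputable def pLevel (s : ℝ) (p : ℕ) (x : Ks s) : ℕ := sInf (pLevelSet s p x)

lemma tent_of_le_half {s x : ℝ} (hs : 0 < s) (hx : x ≤ 1/2) : tent s x = s * x := by
  unfold tent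
  exact min_eq_left (by nlinarith)

lemma tent_half {s : ℝ} (hs : 0 < s) : tent s (1/2 : ℝ) = s/2 := by
  rw [tent_of_le_half hs le_rfl]; ring

lemma tent_zero {s : ℝ} (hs : 0 < s) : tent s 0 = 0 := by
  rw [tent_of_le_half hs (by norm_num)]; ring

lemma Ks.iter {s : ℝ} {x : ℕ → ℝ} (hx : x ∈ Ks s) (m r : ℕ) :
    x m = (tent s)^[r] (x (m + r)) := by
  induction r with
  | zero => rfl
  | succ r ih => rw [ih, ← (hx (m + r)).2, ← Function.iterate_succ_apply]; rfl

/-- The coordinate evaluation function. -/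
noncomputable def coordFn (s : ℝ) (γ : ℝ → Ks s) (m : ℕ) (u : ℝ) : ℝ := (γ u : ℕ → ℝ) m

/-- The set of positive parameters where coordinate `p+j` equals `1/2`. -/
def crossSet (s : ℝ) (p : ℕ) (γ : ℝ → Ks s) (j : ℕ) : Set ℝ :=
  {u : ℝ | 0 < u ∧ coordFn s γ (p + j) u = 1/2}

/-- The first crossing time of coordinate `p+(j+1)`. -/
noncomputable def tauFn (s : ℝ) (p : ℕ) (γ : ℝ → Ks s) (j : ℕ) : ℝ :=
  sInf (crossSet s p γ (j + 1))

lemma mem_crossSet {s : ℝ} {p : ℕ} {γ : ℝ → Ks s} {j : ℕ} {u : ℝ} :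
    u ∈ crossSet s p γ j ↔ 0 < u ∧ coordFn s γ (p + j) u = 1/2 := Iff.rfl

/-- The salient `p`-points of the arc-component `C` of `0̄` satisfy
`sᵢ = σ^(i-1)(s₁)` and `L_p(sᵢ) = i` (here `0`-indexed: `sal i` is the `(i+1)`-st
salient point). `C` is given via an injective continuous parametrization `γ` of the
ray starting at `0̄`, and `sal` enumerates in increasing order exactly the parameters
of salient `p`-points, i.e. `p`-points `y` with `0 < L_p(x) < L_p(y)` for every
`p`-point `x` strictly between `0̄` and `y`. -/
theorem salient_points (s : ℝ) (hs1 : 1 < s) (hs2 : s ≤ 2) (p : ℕ)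
    (σ : Ks s → Ks s) (hσ : IsShift s σ)
    (γ : ℝ → Ks s) (hγc : ContinuousOn γ (Set.Ici 0))
    (hγi : Set.InjOn γ (Set.Ici 0))
    (hγ0 : ∀ i, (γ 0 : ℕ → ℝ) i = 0)
    (salient : ℝ → Prop)
    (hsal : ∀ t, salient t ↔ (0 < t ∧ IsPPoint s p (γ t) ∧ 0 < pLevel s p (γ t) ∧
      ∀ u, 0 < u → u < t → IsPPoint s p (γ u) →
        pLevel s p (γ u) < pLevel s p (γ t)))
    (sal : ℕ → ℝ) (hmono : StrictMono sal)
    (hsal2 : ∀ i, salient (sal i))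
    (hall : ∀ t, salient t → ∃ i, t = sal i) :
    ∀ i : ℕ, γ (sal i) = σ^[i] (γ (sal 0)) ∧ pLevel s p (γ (sal i)) = i + 1 := by
  have hs0 : (0:ℝ) < s := lt_trans one_pos hs1
  set G : ℕ → ℝ → ℝ := coordFn s γ with hGdef
  have hGc : ∀ m, ContinuousOn (G m) (Set.Ici 0) :=
    fun m => ((continuous_apply m).comp continuous_subtype_val).comp_continuousOn hγc
  have hG0 : ∀ m, G m 0 = 0 := fun m => hγ0 m
  have hGrec : ∀ m u, tent s (G (m+1) u) = G m u := fun m u => ((γ u).2 m).2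
  have hGmem : ∀ m u, 0 ≤ G m u ∧ G m u ≤ s/2 := fun m u => ((γ u).2 m).1
  -- one-step descent of crossings
  have descend1 : ∀ m u, 0 < u → G (m+1) u = 1/2 →
      ∃ v, 0 < v ∧ v < u ∧ G m v = 1/2 := by
    intro m u hu h
    have h1 : G m u = s/2 := by rw [← hGrec m u, h, tent_half hs0]
    have hIcc : (1/2 : ℝ) ∈ Set.Icc (G m 0) (G m u) := by
      rw [hG0, h1]; constructor <;> norm_num
      linarith
    obtain ⟨v, hv, hveq⟩ :=
      intermediate_value_Icc hu.le ((hGc m).mono Set.Icc_subset_Ici_self) hIcc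
    have hv0 : 0 < v := by
      rcases (hv.1).lt_or_eq with h' | h'
      · exact h'
      · exfalso; rw [← h', hG0] at hveq; norm_num at hveq
    have hvu : v < u := by
      rcases (hv.2).lt_or_eq with h' | h'
      · exact h'
      · exfalso; rw [h', h1] at hveq; rw [hveq] at h1; linarith [h1] 
    exact ⟨v, hv0, hvu, hveq⟩
  -- multi-step descent
  have descend : ∀ d m u, 0 < u → G (m + d) u = 1/2 →
      ∃ v, 0 < v ∧ v ≤ u ∧ G m v = 1/2 := by
    intro d
    induction d with
    | zero => intro m u hu h; exact ⟨u, hu, le_rfl, h⟩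
    | succ d ih =>
      intro m u hu h
      obtain ⟨v, hv0, hvu, hv⟩ := descend1 (m + d) u hu h
      obtain ⟨w, hw0, hwv, hw⟩ := ih m v hv0 hv
      exact ⟨w, hw0, hwv.trans hvu.le, hw⟩
  -- basic facts about the given salient points
  have hPP : ∀ i, IsPPoint s p (γ (sal i)) := fun i => ((hsal _).1 (hsal2 i)).2.1
  have hpos : ∀ i, 0 < sal i := fun i => ((hsal _).1 (hsal2 i)).1
  have hlpos : ∀ i, 0 < pLevel s p (γ (sal i)) := fun i => ((hsal _).1 (hsal2 i)).2.2.1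
  have hlmono : StrictMono (fun i => pLevel s p (γ (sal i))) := by
    apply strictMono_nat_of_lt_succ
    intro i
    exact ((hsal _).1 (hsal2 (i+1))).2.2.2 (sal i) (hpos i) (hmono (Nat.lt_succ_self i)) (hPP i)
  have hlge : ∀ i, i + 1 ≤ pLevel s p (γ (sal i)) := by
    intro i
    induction i with
    | zero => exact hlpos 0
    | succ i ih =>
      have h2 : pLevel s p (γ (sal i)) < pLevel s p (γ (sal (i+1))) :=
        hlmono (Nat.lt_succ_self i)
      omega
  have hmemLevel : ∀ i, G (p + pLevel s p (γ (sal i))) (sal i) = 1/2 :=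
    fun i => Nat.sInf_mem (hPP i)
  by_cases hper : ∃ r, 0 < r ∧ (tent s)^[r] (1/2 : ℝ) = 1/2
  · -- periodic critical point: the hypotheses are contradictory
    exfalso
    obtain ⟨r, hr0, hr⟩ := hper
    have key : pLevel s p (γ (sal r)) < r := by
      set x := γ (sal r) with hx
      have hmem : (x : ℕ → ℝ) (p + pLevel s p x) = 1/2 := Nat.sInf_mem (hPP r)
      by_contra hge
      push_neg at hge
      have hmem2 : (x : ℕ → ℝ) (p + (pLevel s p x - r)) = 1/2 := by
        have hit := Ks.iter x.2 (p + (pLevel s p x - r)) r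
        rw [hit, show p + (pLevel s p x - r) + r = p + pLevel s p x by omega, hmem, hr]
      have hle : pLevel s p x ≤ pLevel s p x - r :=
        Nat.sInf_le (show _ ∈ pLevelSet s p x from hmem2)
      omega
    have := hlge r
    omega
  · push_neg at hper
    have hnp : ∀ r, 0 < r → (tent s)^[r] (1/2 : ℝ) ≠ 1/2 := hper
    set T : ℕ → ℝ := tauFn s p γ with hTdef
    set S : ℕ → Set ℝ := crossSet s p γ with hSdef
    have hSbdd : ∀ j, BddBelow (S j) := fun j => ⟨0, fun u hu => hu.1.le⟩
    -- nonemptiness of crossing sets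
    have hSne : ∀ j, (S (j+1)).Nonempty := by
      intro j
      have hL := hlge j
      have hcr : G (p + (j+1) + (pLevel s p (γ (sal j)) - (j+1))) (sal j) = 1/2 := by
        rw [show p + (j+1) + (pLevel s p (γ (sal j)) - (j+1)) = p + pLevel s p (γ (sal j))
          by omega]
        exact hmemLevel j
      obtain ⟨v, hv0, hvle, hv⟩ := descend _ _ _ (hpos j) hcr
      exact ⟨v, hv0, hv⟩
    -- the infimum is a positive crossing
    have hTmem : ∀ j, 0 < T j ∧ G (p + (j+1)) (T j) = 1/2 := by
      intro j
      have hcl : T j ∈ closure (S (j+1)) := csInf_mem_closure (hSne j) (hSbdd (j+1))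
      have hTset : IsClosed (Set.Ici (0:ℝ) ∩ (G (p + (j+1))) ⁻¹' {(1/2:ℝ)}) :=
        (hGc _).preimage_isClosed_of_isClosed isClosed_Ici isClosed_singleton
      have hsub : S (j+1) ⊆ Set.Ici 0 ∩ (G (p + (j+1))) ⁻¹' {(1/2:ℝ)} :=
        fun u hu => ⟨hu.1.le, hu.2⟩
      have hmem := (closure_minimal hsub hTset) hcl
      have heq : G (p + (j+1)) (T j) = 1/2 := hmem.2
      have hne : T j ≠ 0 := by
        intro h; rw [h, hG0] at heq; norm_num at heq
      exact ⟨lt_of_le_of_ne hmem.1 (Ne.symm hne), heq⟩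
    have hTle : ∀ j u, u ∈ S (j+1) → T j ≤ u := fun j u hu => csInf_le (hSbdd _) hu
    -- coordinate p+(j+1) stays ≤ 1/2 before T j
    have hbelow : ∀ j u, 0 ≤ u → u ≤ T j → G (p + (j+1)) u ≤ 1/2 := by
      intro j u hu0 huT
      by_contra hgt
      push_neg at hgt
      have hu0' : 0 < u := by
        rcases hu0.lt_or_eq with h' | h'
        · exact h'
        · exfalso; rw [← h', hG0] at hgt; norm_num at hgt
      have hIcc : (1/2:ℝ) ∈ Set.Icc (G (p+(j+1)) 0) (G (p+(j+1)) u) := by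
        rw [hG0]; exact ⟨by norm_num, hgt.le⟩
      obtain ⟨w, hw, hweq⟩ :=
        intermediate_value_Icc hu0 ((hGc _).mono Set.Icc_subset_Ici_self) hIcc
      have hw0 : 0 < w := by
        rcases (hw.1).lt_or_eq with h' | h'
        · exact h'
        · exfalso; rw [← h', hG0] at hweq; norm_num at hweq
      have h1 : T j ≤ w := hTle j w ⟨hw0, hweq⟩
      have h2 : u = T j := le_antisymm huT (h1.trans hw.2)
      rw [h2, (hTmem j).2] at hgt
      norm_num at hgt
    -- confinement of higher coordinates before T j
    have hconf : ∀ j k, (∀ u, 0 ≤ u → u ≤ T j → G (p + (j+1) + k) u ≤ 1/2 / s^k) ∧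
        G (p + (j+1) + k) (T j) = 1/2 / s^k := by
      intro j k
      induction k with
      | zero =>
        rw [pow_zero, div_one]
        exact ⟨fun u h1 h2 => hbelow j u h1 h2, (hTmem j).2⟩
      | succ k ih =>
        obtain ⟨ihle, iheq⟩ := ih
        set c := (1/2:ℝ) / s^k with hcdef
        have hsk : (1:ℝ) ≤ s^k := one_le_pow₀ hs1.le
        have hc0 : 0 < c := by positivity
        have hcle : c ≤ 1/2 := by
          rw [hcdef]
          exact div_le_self (by norm_num) hsk
        have hcs : c / s = 1/2 / s^(k+1) := by
          rw [hcdef, div_div, pow_succ]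
        have hstep : ∀ u, 0 ≤ u → u ≤ T j → G (p + (j+1) + k + 1) u ≤ c / s := by
          intro u hu0 huT
          by_contra hgt
          push_neg at hgt
          have hcs0 : 0 < c / s := by positivity
          have hu0' : 0 < u := by
            rcases hu0.lt_or_eq with h' | h'
            · exact h'
            · exfalso; rw [← h', hG0] at hgt; linarith
          have hle2 : tent s (G (p + (j+1) + k + 1) u) ≤ c := by
            rw [hGrec]; exact ihle u hu0 huT
          set x := G (p + (j+1) + k + 1) u with hxdef
          have hsx : ¬ (s * x ≤ c) := by
            intro hcon
            have : x ≤ c / s := by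
              rw [le_div_iff₀ hs0]; linarith [mul_comm s x]
            linarith
          have h2 : s * (1 - x) ≤ c := by
            rcases min_le_iff.1 (show min (s*x) (s*(1-x)) ≤ c from hle2) with h' | h'
            · exact absurd h' hsx
            · exact h'
          have hxbig : 1/2 < x := by nlinarith
          have hIcc : (1/2:ℝ) ∈ Set.Icc (G (p+(j+1)+k+1) 0) (G (p+(j+1)+k+1) u) := by
            rw [hG0]; exact ⟨by norm_num, hxbig.le⟩
          obtain ⟨w, hw, hweq⟩ :=
            intermediate_value_Icc hu0 ((hGc _).mono Set.Icc_subset_Ici_self) hIcc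
          have hcontra := ihle w hw.1 (hw.2.trans huT)
          rw [← hGrec (p + (j+1) + k) w, hweq, tent_half hs0] at hcontra
          linarith
        have hxT : G (p + (j+1) + k + 1) (T j) ≤ c / s := hstep (T j) (hTmem j).1.le le_rfl
        have hxle : G (p + (j+1) + k + 1) (T j) ≤ 1/2 := by
          have : c / s ≤ c := div_le_self hc0.le hs1.le
          linarith
        have heq2 : s * G (p + (j+1) + k + 1) (T j) = c := by
          rw [← tent_of_le_half hs0 hxle, hGrec]; exact iheq
        have heq3 : G (p + (j+1) + k + 1) (T j) = c / s := by
          rw [eq_div_iff (ne_of_gt hs0)]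
          linarith [mul_comm s (G (p + (j+1) + k + 1) (T j))]
        have heq4 : G (p + (j+1) + k + 1) (T j) = 1/2 / s^(k+1) := by rw [heq3, hcs]
        exact ⟨fun u h1 h2 => by
          have := hstep u h1 h2
          rw [hcs] at this
          exact this, heq4⟩
    -- the level of γ (T j) is exactly j+1
    have hTlevel : ∀ j, pLevel s p (γ (T j)) = j + 1 := by
      intro j
      have hmem : (j+1) ∈ pLevelSet s p (γ (T j)) := (hTmem j).2
      have hne : (pLevelSet s p (γ (T j))).Nonempty := ⟨j+1, hmem⟩
      have hle : pLevel s p (γ (T j)) ≤ j + 1 := Nat.sInf_le hmem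
      by_contra hne'
      have hlt : pLevel s p (γ (T j)) < j + 1 := lt_of_le_of_ne hle hne'
      have h0 : (γ (T j) : ℕ → ℝ) (p + pLevel s p (γ (T j))) = 1/2 := Nat.sInf_mem hne
      have hiter := Ks.iter (γ (T j)).2 (p + pLevel s p (γ (T j))) (j + 1 - pLevel s p (γ (T j)))
      rw [show p + pLevel s p (γ (T j)) + (j + 1 - pLevel s p (γ (T j))) = p + (j+1) by omega]
        at hiter
      have h12b : (γ (T j) : ℕ → ℝ) (p + (j+1)) = 1/2 := (hTmem j).2
      rw [h12b] at hiter
      exact hnp (j + 1 - pLevel s p (γ (T j))) (by omega) (by rw [← hiter]; exact h0)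
    -- each T j is salient
    have hTsal : ∀ j, salient (T j) := by
      intro j
      rw [hsal]
      refine ⟨(hTmem j).1, ⟨j+1, (hTmem j).2⟩, by rw [hTlevel]; omega, ?_⟩
      intro u hu0 huT hPPu
      rw [hTlevel]
      by_contra hge
      push_neg at hge
      have hmem' : (γ u : ℕ → ℝ) (p + pLevel s p (γ u)) = 1/2 := Nat.sInf_mem hPPu
      have hcr : G (p + (j+1) + (pLevel s p (γ u) - (j+1))) u = 1/2 := by
        rw [show p + (j+1) + (pLevel s p (γ u) - (j+1)) = p + pLevel s p (γ u) by omega]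
        exact hmem'
      obtain ⟨v, hv0, hvu, hveq⟩ := descend _ _ _ hu0 hcr
      have := hTle j v ⟨hv0, hveq⟩
      linarith
    -- each sal i is the first crossing at its level
    have hsalT : ∀ i, sal i = T (pLevel s p (γ (sal i)) - 1) := by
      intro i
      have hL1 : 1 ≤ pLevel s p (γ (sal i)) := hlpos i
      have hmem' : sal i ∈ S (pLevel s p (γ (sal i)) - 1 + 1) := by
        rw [show pLevel s p (γ (sal i)) - 1 + 1 = pLevel s p (γ (sal i)) by omega]
        exact ⟨hpos i, hmemLevel i⟩
      have hle : T (pLevel s p (γ (sal i)) - 1) ≤ sal i := hTle _ _ hmem'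
      rcases hle.lt_or_eq with hlt | heq
      · exfalso
        have hcond := ((hsal _).1 (hsal2 i)).2.2.2 (T (pLevel s p (γ (sal i)) - 1))
          (hTmem _).1 hlt ⟨_, (hTmem _).2⟩
        rw [hTlevel] at hcond
        omega
      · exact heq.symm
    -- T is strictly monotone
    have hTmono : StrictMono T := by
      apply strictMono_nat_of_lt_succ
      intro j
      obtain ⟨v, hv0, hvlt, hveq⟩ := descend1 (p + (j+1)) (T (j+1)) (hTmem (j+1)).1
        (show G (p + (j+1) + 1) (T (j+1)) = 1/2 from (hTmem (j+1)).2)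
      exact lt_of_le_of_lt (hTle j v ⟨hv0, hveq⟩) hvlt
    -- the levels are exactly i+1
    have hsurj : ∀ j, ∃ i, pLevel s p (γ (sal i)) = j + 1 := by
      intro j
      obtain ⟨i, hi⟩ := hall (T j) (hTsal j)
      refine ⟨i, ?_⟩
      rw [← hi]
      exact hTlevel j
    have hlev : ∀ i, pLevel s p (γ (sal i)) = i + 1 := by
      intro i
      induction i with
      | zero =>
        obtain ⟨m, hm⟩ := hsurj 0
        have hge := hlge m
        have hm0 : m = 0 := by omega
        rw [hm0] at hm; exact hm
      | succ i ih =>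
        obtain ⟨m, hm⟩ := hsurj (i+1)
        have hge := hlge m
        have hm1 : m = i + 1 := by
          rcases lt_trichotomy m (i+1) with h | h | h
          · exfalso
            have hle2 : pLevel s p (γ (sal m)) ≤ pLevel s p (γ (sal i)) :=
              hlmono.monotone (Nat.le_of_lt_succ h)
            rw [ih] at hle2
            omega
          · exact h
          · omega
        rw [hm1] at hm; exact hm
    have hsalTi : ∀ i, sal i = T i := by
      intro i
      rw [hsalT i, hlev i]
      norm_num
    -- coordinate formulas for γ (T i)
    have coordA : ∀ i k, (γ (T i) : ℕ → ℝ) (p + (i+1) + k) = 1/2 / s^k :=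
      fun i k => (hconf i k).2
    have coordB : ∀ i m, m ≤ p + (i+1) →
        (γ (T i) : ℕ → ℝ) m = (tent s)^[p + (i+1) - m] (1/2) := by
      intro i m hm
      have hit := Ks.iter (γ (T i)).2 m (p + (i+1) - m)
      rw [hit, show m + (p + (i+1) - m) = p + (i+1) by omega]
      have h12 : (γ (T i) : ℕ → ℝ) (p + (i+1)) = 1/2 := by
        have := coordA i 0
        simpa using this
      rw [h12]
    -- the shift step
    have hstepσ : ∀ i, γ (T (i+1)) = σ (γ (T i)) := by
      intro i
      apply Subtype.ext
      funext m
      cases m with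
      | zero =>
        rw [show ((σ (γ (T i)) : ℕ → ℝ)) 0 = tent s ((γ (T i) : ℕ → ℝ) 0) from
          (hσ (γ (T i))).1]
        rw [coordB (i+1) 0 (by omega), coordB i 0 (by omega)]
        rw [show p + (i+1+1) - 0 = (p + (i+1) - 0) + 1 by omega,
          Function.iterate_succ_apply']
      | succ m =>
        rw [show ((σ (γ (T i)) : ℕ → ℝ)) (m+1) = (γ (T i) : ℕ → ℝ) m from
          (hσ (γ (T i))).2 m]
        by_cases hm : m ≤ p + (i+1)
        · rw [coordB (i+1) (m+1) (by omega), coordB i m hm]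
          congr 1
          omega
        · push_neg at hm
          have e1 : p + (i+1) + (m - (p + (i+1))) = m := by omega
          have e2 : p + (i+1+1) + (m - (p + (i+1))) = m + 1 := by omega
          have h1 := coordA i (m - (p + (i+1)))
          rw [e1] at h1
          have h2 := coordA (i+1) (m - (p + (i+1)))
          rw [e2] at h2
          rw [h1, h2]
    -- iterate formula
    have hiterσ : ∀ i, γ (T i) = σ^[i] (γ (T 0)) := by
      intro i
      induction i with
      | zero => rfl
      | succ i ih =>
        rw [Function.iterate_succ_apply', ← ih, hstepσ i]
    intro i
    refine ⟨?_, hlev i⟩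
    rw [hsalTi i, hsalTi 0]
    exact hiterσ i
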